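/- (Finite container bound implies density bound) Let V be a packing in ℝ³ and let c be a real number such that for every real r ≥ 1 the number of points of V in the open ball B(0,r) is at most π·r³/√18 + c·r². Then the limit superior, as r → ∞, of vol((⋃_{v ∈ V} B(v,1)) ∩ B(0,r)) / vol(B(0,r)) is at most π/√18. -/

import Mathlib

/-!
Every point of `⋃ v ∈ V, B(v,1)` lying in `B(0,r)` lies in a unit ball centred at a point of
`V ∩ B(0,r+1)`, a finite set because the points of `V` are `2`-separated. Hence the volume of
`(⋃ v ∈ V, B(v,1)) ∩ B(0,r)` is at most `#(V ∩ B(0,r+1)) · vol B(0,1)`, and the density ratio is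
at most `#(V ∩ B(0,r+1)) / r³ ≤ (π (r+1)³/√18 + c (r+1)²) / r³`, which tends to `π/√18`.
-/

open Real Metric MeasureTheory Filter Module Topology

theorem Set.Finite.inter_of_totallyBounded_of_separated {α : Type*} [PseudoMetricSpace α]
    {V K : Set α} {δ : ℝ} (hδ : 0 < δ) (hV : ∀ u ∈ V, ∀ v ∈ V, u ≠ v → δ ≤ dist u v)
    (hK : TotallyBounded K) : (V ∩ K).Finite := by
  obtain ⟨t, ht, hKt⟩ := totallyBounded_iff.1 hK (δ / 2) (half_pos hδ)
  have hsub : V ∩ K ⊆ ⋃ y ∈ t, V ∩ ball y (δ / 2) := fun x ⟨hxV, hxK⟩ => by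
    obtain ⟨y, hy, hxy⟩ := mem_iUnion₂.1 (hKt hxK)
    exact mem_iUnion₂.2 ⟨y, hy, hxV, hxy⟩
  refine (ht.biUnion fun y _ => Set.Subsingleton.finite ?_).subset hsub
  rintro u ⟨huV, hu⟩ v ⟨hvV, hv⟩
  by_contra huv
  rw [mem_ball] at hu hv
  linarith [hV u huV v hvV huv, dist_triangle_right u v y]

open Set in
theorem iUnion_ball_inter_ball_subset {α : Type*} [PseudoMetricSpace α] (V : Set α) (x : α)
    (r δ : ℝ) : (⋃ v ∈ V, ball v δ) ∩ ball x r ⊆ ⋃ v ∈ V ∩ ball x (r + δ), ball v δ := by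
  rintro y ⟨hy, hyx⟩
  obtain ⟨v, hvV, hyv⟩ := mem_iUnion₂.1 hy
  refine mem_iUnion₂.2 ⟨v, ⟨hvV, ?_⟩, hyv⟩
  rw [mem_ball] at *
  linarith [dist_triangle_left v x y]

section AddHaar

variable {E : Type*} [NormedAddCommGroup E] [MeasurableSpace E] [BorelSpace E]
  (μ : Measure E) [μ.IsAddHaarMeasure]

theorem measure_biUnion_ball_le_ncard_mul {s : Set E} (hs : s.Finite) (δ : ℝ) :
    μ (⋃ v ∈ s, ball v δ) ≤ s.ncard * μ (ball 0 δ) := by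
  rw [← hs.coe_toFinset, Set.ncard_coe_finset]
  calc μ (⋃ v ∈ hs.toFinset, ball v δ) ≤ ∑ v ∈ hs.toFinset, μ (ball v δ) :=
        measure_biUnion_finset_le _ _
    _ = hs.toFinset.card * μ (ball 0 δ) := by
        simp only [Measure.addHaar_ball_center, Finset.sum_const, nsmul_eq_mul]

theorem measure_iUnion_ball_inter_ball_le {V : Set E} {x : E} {r δ : ℝ}
    (hfin : (V ∩ ball x (r + δ)).Finite) :
    μ ((⋃ v ∈ V, ball v δ) ∩ ball x r) ≤ (V ∩ ball x (r + δ)).ncard * μ (ball 0 δ) :=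
  (measure_mono (iUnion_ball_inter_ball_subset V x r δ)).trans
    (measure_biUnion_ball_le_ncard_mul μ hfin δ)

variable [NormedSpace ℝ E] [FiniteDimensional ℝ E]

theorem toReal_measure_iUnion_ball_inter_ball_div_le {V : Set E} {x : E} {r δ : ℝ}
    (hr : 0 < r) (hδ : 0 < δ) (hfin : (V ∩ ball x (r + δ)).Finite) :
    (μ ((⋃ v ∈ V, ball v δ) ∩ ball x r)).toReal / (μ (ball x r)).toReal ≤
      (V ∩ ball x (r + δ)).ncard * (δ / r) ^ finrank ℝ E := by
  set B := (μ (ball (0 : E) δ)).toReal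
  have hB : 0 < B := ENNReal.toReal_pos (measure_ball_pos μ _ hδ).ne' measure_ball_lt_top.ne
  have hnum : (μ ((⋃ v ∈ V, ball v δ) ∩ ball x r)).toReal ≤ (V ∩ ball x (r + δ)).ncard * B := by
    simpa only [ENNReal.toReal_mul, ENNReal.toReal_natCast] using
      ENNReal.toReal_mono (ENNReal.mul_ne_top (by simp) measure_ball_lt_top.ne)
        (measure_iUnion_ball_inter_ball_le μ hfin)
  -- `ball x r` is the dilate of `ball 0 δ` by the factor `r / δ`
  have hden : (μ (ball x r)).toReal = (r / δ) ^ finrank ℝ E * B := by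
    rw [← div_mul_cancel₀ r hδ.ne', Measure.addHaar_ball_mul_of_pos μ x (div_pos hr hδ),
      div_mul_cancel₀ r hδ.ne', ENNReal.toReal_mul, ENNReal.toReal_ofReal (by positivity)]
  calc _ ≤ (V ∩ ball x (r + δ)).ncard * B / ((r / δ) ^ finrank ℝ E * B) := by
        rw [hden]; gcongr
    _ = _ := by rw [mul_div_mul_right _ _ hB.ne', div_eq_mul_inv, ← inv_pow, inv_div]

end AddHaar

theorem tendsto_add_one_cubic_mul_one_div_cube (a c : ℝ) :
    Tendsto (fun r : ℝ => (a * (r + 1) ^ 3 + c * (r + 1) ^ 2) * (1 / r) ^ 3) atTop (𝓝 a) := by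
  have hcont : Tendsto (fun t : ℝ => a * (1 + t) ^ 3 + c * t * (1 + t) ^ 2) (𝓝 0) (𝓝 a) := by
    simpa using ((by fun_prop : Continuous fun t : ℝ => a * (1 + t) ^ 3 + c * t * (1 + t) ^ 2)
      |>.tendsto 0)
  refine (hcont.comp tendsto_inv_atTop_zero).congr' ?_
  filter_upwards [eventually_ne_atTop 0] with r hr
  simp only [Function.comp_apply]
  field_simp

/-- (Finite container bound implies density bound) If `V` is a packing in `ℝ³` and `c` is a
real number such that for every `r ≥ 1` the number of points of `V` in the open ball `B(0,r)`
is at most `π·r³/√18 + c·r²`, then the limsup, as `r → ∞`, of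
`vol((⋃ v ∈ V, B(v,1)) ∩ B(0,r)) / vol(B(0,r))` is at most `π/√18`. -/
theorem finite_container_bound_implies_density_bound
    (V : Set (EuclideanSpace ℝ (Fin 3)))
    (hV : ∀ u ∈ V, ∀ v ∈ V, u ≠ v → 2 ≤ dist u v)
    (c : ℝ)
    (hc : ∀ r : ℝ, 1 ≤ r →
      ((V ∩ ball (0 : EuclideanSpace ℝ (Fin 3)) r).ncard : ℝ) ≤
        π * r ^ 3 / Real.sqrt 18 + c * r ^ 2) :
    limsup (fun r : ℝ =>
        (volume ((⋃ v ∈ V, ball v 1) ∩ ball (0 : EuclideanSpace ℝ (Fin 3)) r)).toReal /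
          (volume (ball (0 : EuclideanSpace ℝ (Fin 3)) r)).toReal) atTop
      ≤ π / Real.sqrt 18 := by
  have hfin (r : ℝ) : (V ∩ ball (0 : EuclideanSpace ℝ (Fin 3)) (r + 1)).Finite :=
    .inter_of_totallyBounded_of_separated two_pos hV
      ((isCompact_closedBall _ _).totallyBounded.subset ball_subset_closedBall)
  have hbound : ∀ᶠ r in atTop,
      (volume ((⋃ v ∈ V, ball v 1) ∩ ball (0 : EuclideanSpace ℝ (Fin 3)) r)).toReal /
          (volume (ball (0 : EuclideanSpace ℝ (Fin 3)) r)).toReal ≤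
        (π / √18 * (r + 1) ^ 3 + c * (r + 1) ^ 2) * (1 / r) ^ 3 := by
    filter_upwards [eventually_ge_atTop 1] with r hr
    calc _ ≤ (V ∩ ball 0 (r + 1)).ncard * (1 / r) ^ 3 := by
          simpa only [finrank_euclideanSpace_fin] using
            toReal_measure_iUnion_ball_inter_ball_div_le volume (by linarith) one_pos (hfin r)
      _ ≤ _ := by
          gcongr
          exact (hc (r + 1) (by linarith)).trans_eq (by ring)
  rw [← (tendsto_add_one_cubic_mul_one_div_cube (π / √18) c).limsup_eq]
  exact limsup_le_limsup hbound (isCoboundedUnder_le_of_le atTop fun _ => by positivity)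
    (tendsto_add_one_cubic_mul_one_div_cube _ c).isBoundedUnder_le
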